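/- Every cyclic Steiner triple system STS(v) with v > 7 admits a zero-sum 4-flow. -/

import Mathlib

/-!
Translation by `ZMod v` permutes the blocks. Summing the points of a block `b` with `k +ᵥ b = b`
gives `3 • k = 0`, and counting the pairs `(k, x)` with `x ∈ k +ᵥ b` shows that every orbit of blocks
covers each point `3 / #periods b` times: once for a short orbit, three times for a full one. A short
block is a coset of the 3-torsion subgroup, which is unique in a cyclic group, so there is at most one
short orbit. Weight `-3` on it and weights `±1, ±2` on the full orbits summing to the number of short
orbits give a zero-sum flow. Such weights exist unless there is a single full orbit and no short one;
then the three blocks through a point cover at most six other points, so `v ≤ 7`.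
-/

open Finset Pointwise

section Translates

variable {G : Type*} [AddCommGroup G] [Fintype G] [DecidableEq G]

def translates (b : Finset G) : Finset (Finset G) := univ.image (fun k : G => k +ᵥ b)

def periods (b : Finset G) : Finset G := {k | k +ᵥ b = b}

@[simp] lemma mem_translates {b c : Finset G} : c ∈ translates b ↔ ∃ k : G, k +ᵥ b = c := by
  simp [translates]

@[simp] lemma mem_periods {b : Finset G} {k : G} : k ∈ periods b ↔ k +ᵥ b = b := by
  simp [periods]

lemma self_mem_translates (b : Finset G) : b ∈ translates b :=
  mem_translates.2 ⟨0, zero_vadd G b⟩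

lemma translates_vadd (k : G) (b : Finset G) : translates (k +ᵥ b) = translates b := by
  ext c
  simp only [mem_translates, vadd_vadd]
  exact ⟨fun ⟨l, hl⟩ => ⟨l + k, hl⟩, fun ⟨l, hl⟩ => ⟨l - k, by rwa [sub_add_cancel]⟩⟩

lemma translates_eq_of_mem {b c : Finset G} (h : c ∈ translates b) :
    translates c = translates b := by
  obtain ⟨k, rfl⟩ := mem_translates.1 h
  exact translates_vadd k b

lemma periods_vadd (k : G) (b : Finset G) : periods (k +ᵥ b) = periods b := by
  ext l
  rw [mem_periods, mem_periods, vadd_comm, vadd_left_cancel_iff]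

lemma periods_eq_of_mem_translates {b c : Finset G} (h : c ∈ translates b) :
    periods c = periods b := by
  obtain ⟨k, rfl⟩ := mem_translates.1 h
  exact periods_vadd k b

lemma card_nsmul_eq_zero_of_mem_periods {b : Finset G} {k : G} (hk : k ∈ periods b) :
    #b • k = 0 := by
  have h := congrArg (∑ y ∈ ·, y) (mem_periods.1 hk)
  simp only [vadd_finset_def, vadd_eq_add] at h
  rwa [sum_image (add_right_injective k).injOn, sum_add_distrib, sum_const, add_eq_right] at h

lemma vadd_periods_subset {b : Finset G} {y : G} (hy : y ∈ b) : y +ᵥ periods b ⊆ b := by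
  intro z hz
  obtain ⟨k, hk, rfl⟩ := mem_vadd_finset.1 hz
  rw [vadd_eq_add, add_comm, ← vadd_eq_add, ← mem_periods.1 hk]
  exact vadd_mem_vadd_finset hy

lemma vadd_periods_eq {b : Finset G} {y : G} (hy : y ∈ b) (h : #(periods b) = #b) :
    y +ᵥ periods b = b :=
  eq_of_subset_of_card_le (vadd_periods_subset hy) (by rw [card_vadd_finset, h])

theorem card_filter_mem_translates_mul_card_periods (b : Finset G) (x : G) :
    #{c ∈ translates b | x ∈ c} * #(periods b) = #b := by
  set K : Finset G := {k | x ∈ k +ᵥ b}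
  have hK : K = b.image (x - ·) := by
    ext k
    simp only [K, mem_filter, mem_univ, true_and, mem_image, ← neg_vadd_mem_iff, vadd_eq_add]
    constructor
    · exact fun h => ⟨_, h, by abel⟩
    · rintro ⟨y, hy, rfl⟩
      rwa [neg_sub, sub_add_cancel]
  have himage : K.image (· +ᵥ b) = {c ∈ translates b | x ∈ c} := by
    ext c
    simp only [K, mem_image, mem_filter, mem_univ, true_and, mem_translates]
    constructor
    · rintro ⟨k, hx, rfl⟩
      exact ⟨⟨k, rfl⟩, hx⟩
    · rintro ⟨⟨k, rfl⟩, hx⟩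
      exact ⟨k, hx, rfl⟩
  have hfiber : ∀ c ∈ K.image (· +ᵥ b), #{k ∈ K | k +ᵥ b = c} = #(periods b) := by
    intro c hc
    obtain ⟨k₀, hk₀, rfl⟩ := mem_image.1 hc
    rw [← card_vadd_finset k₀ (periods b)]
    congr 1
    ext k
    rw [mem_filter, ← neg_vadd_mem_iff, mem_periods, vadd_eq_add, ← vadd_vadd, neg_vadd_eq_iff]
    exact and_iff_right_of_imp fun h => by simpa [K, h] using hk₀
  rw [← himage, ← sum_const_nat hfiber, ← card_eq_sum_card_image, hK,
    card_image_of_injective _ (sub_right_injective)]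

lemma card_periods_dvd_card (b : Finset G) : #(periods b) ∣ #b :=
  Dvd.intro_left _ (card_filter_mem_translates_mul_card_periods b 0)

lemma sum_filter_mem_eq_sum_translates {M : Type*} [AddCommMonoid M] {B : Finset (Finset G)}
    (hB : ∀ b ∈ B, ∀ k : G, k +ᵥ b ∈ B) (g : Finset (Finset G) → M) (x : G) :
    ∑ b ∈ B with x ∈ b, g (translates b) = ∑ O ∈ B.image translates, #{c ∈ O | x ∈ c} • g O := by
  rw [← sum_fiberwise_of_maps_to (t := B.image translates)
    fun b hb => mem_image_of_mem _ (mem_filter.1 hb).1]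
  refine sum_congr rfl fun O hO => ?_
  obtain ⟨b₀, hb₀, rfl⟩ := mem_image.1 hO
  have hfiber : {b ∈ {b ∈ B | x ∈ b} | translates b = translates b₀} =
      {c ∈ translates b₀ | x ∈ c} := by
    ext c
    simp only [mem_filter]
    constructor
    · rintro ⟨⟨-, hx⟩, hc⟩
      exact ⟨hc ▸ self_mem_translates c, hx⟩
    · rintro ⟨hc, hx⟩
      obtain ⟨k, rfl⟩ := mem_translates.1 hc
      exact ⟨⟨hB _ hb₀ k, hx⟩, translates_vadd k b₀⟩
  rw [← hfiber, ← sum_const]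
  exact sum_congr rfl fun b hb => by rw [(mem_filter.1 hb).2]

def shortOrbits (B : Finset (Finset G)) : Finset (Finset (Finset G)) :=
  {b ∈ B | #(periods b) ≠ 1}.image translates

def fullOrbits (B : Finset (Finset G)) : Finset (Finset (Finset G)) :=
  {b ∈ B | #(periods b) = 1}.image translates

lemma disjoint_shortOrbits_fullOrbits (B : Finset (Finset G)) :
    Disjoint (shortOrbits B) (fullOrbits B) := by
  refine disjoint_left.2 fun O hs hf => ?_
  obtain ⟨b, hb, rfl⟩ := mem_image.1 hs
  obtain ⟨c, hc, hcb⟩ := mem_image.1 hf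
  have := periods_eq_of_mem_translates (hcb ▸ self_mem_translates c)
  exact (mem_filter.1 hb).2 (this ▸ (mem_filter.1 hc).2)

lemma card_filter_mem_translates_of_card_periods_eq_one {b : Finset G} (hb : #(periods b) = 1)
    (x : G) : #{c ∈ translates b | x ∈ c} = #b := by
  simpa [hb] using card_filter_mem_translates_mul_card_periods b x

lemma card_periods_eq_card_of_ne_one {b : Finset G} (hp : (#b).Prime) (hb : #(periods b) ≠ 1) :
    #(periods b) = #b :=
  ((Nat.dvd_prime hp).1 (card_periods_dvd_card b)).resolve_left hb

lemma card_filter_mem_translates_of_card_periods_ne_one {b : Finset G} (hp : (#b).Prime)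
    (hb : #(periods b) ≠ 1) (x : G) : #{c ∈ translates b | x ∈ c} = 1 := by
  have hcount := card_filter_mem_translates_mul_card_periods b x
  rwa [card_periods_eq_card_of_ne_one hp hb, mul_eq_right₀ hp.ne_zero] at hcount

theorem sum_filter_mem_eq_sum_shortOrbits_add {M : Type*} [AddCommMonoid M]
    {B : Finset (Finset G)} (hB : ∀ b ∈ B, ∀ k : G, k +ᵥ b ∈ B) {p : ℕ} (hp : p.Prime)
    (hcard : ∀ b ∈ B, #b = p) (g : Finset (Finset G) → M) (x : G) :
    ∑ b ∈ B with x ∈ b, g (translates b) =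
      ∑ O ∈ shortOrbits B, g O + p • ∑ O ∈ fullOrbits B, g O := by
  have hinv (P : ℕ → Prop) [DecidablePred P] :
      ∀ b ∈ {b ∈ B | P #(periods b)}, ∀ k : G, k +ᵥ b ∈ {b ∈ B | P #(periods b)} := by
    intro b hb k
    rw [mem_filter, periods_vadd] at *
    exact ⟨hB b hb.1 k, hb.2⟩
  rw [← sum_filter_not_add_sum_filter _ (fun b => #(periods b) = 1),
    filter_comm, filter_comm (p := (x ∈ ·)),
    sum_filter_mem_eq_sum_translates (hinv (¬ · = 1)),
    sum_filter_mem_eq_sum_translates (hinv (· = 1)), smul_sum]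
  congr 1
  · refine sum_congr rfl fun O hO => ?_
    obtain ⟨b, hb, rfl⟩ := mem_image.1 hO
    obtain ⟨hbB, hb⟩ := mem_filter.1 hb
    rw [card_filter_mem_translates_of_card_periods_ne_one (hcard b hbB ▸ hp) hb, one_smul]
  · refine sum_congr rfl fun O hO => ?_
    obtain ⟨b, hb, rfl⟩ := mem_image.1 hO
    obtain ⟨hbB, hb⟩ := mem_filter.1 hb
    rw [card_filter_mem_translates_of_card_periods_eq_one hb, hcard b hbB]

lemma translates_eq_of_card_periods_eq_card [IsAddCyclic G] {b c : Finset G} (hbc : #b = #c)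
    (hb : #(periods b) = #b) (hc : #(periods c) = #c) (hne : b.Nonempty) :
    translates b = translates c := by
  set T : Finset G := {a | #b • a = 0}
  have hT : #T ≤ #b := IsAddCyclic.card_nsmul_eq_zero_le hne.card_pos
  have hperiods {d : Finset G} (hd : #(periods d) = #d) (hdb : #d = #b) : periods d = T :=
    eq_of_subset_of_card_le
      (fun a ha => mem_filter.2 ⟨mem_univ a, hdb ▸ card_nsmul_eq_zero_of_mem_periods ha⟩)
      (hT.trans (hd.trans hdb).ge)
  obtain ⟨z, hz⟩ := card_pos.1 (hbc ▸ hne.card_pos)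
  obtain ⟨y, hy⟩ := hne
  refine (translates_eq_of_mem (mem_translates.2 ⟨z - y, ?_⟩)).symm
  rw [← vadd_periods_eq hy hb, ← vadd_periods_eq hz hc, hperiods hb rfl, hperiods hc hbc.symm,
    vadd_vadd, sub_add_cancel]

lemma card_shortOrbits_le_one [IsAddCyclic G] {B : Finset (Finset G)} {p : ℕ} (hp : p.Prime)
    (hcard : ∀ b ∈ B, #b = p) : #(shortOrbits B) ≤ 1 := by
  refine card_le_one.2 fun O hO O' hO' => ?_
  obtain ⟨b, hb, rfl⟩ := mem_image.1 hO
  obtain ⟨c, hc, rfl⟩ := mem_image.1 hO'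
  obtain ⟨hbB, hb⟩ := mem_filter.1 hb
  obtain ⟨hcB, hc⟩ := mem_filter.1 hc
  have hbp := hcard b hbB
  have hcp := hcard c hcB
  exact translates_eq_of_card_periods_eq_card (hbp.trans hcp.symm)
    (card_periods_eq_card_of_ne_one (hbp ▸ hp) hb) (card_periods_eq_card_of_ne_one (hcp ▸ hp) hc)
    (card_pos.1 (hbp ▸ hp.pos))

end Translates

theorem exists_nonzero_weights_sum_eq {α : Type*} [DecidableEq α] {F : Finset α} (hF : F.Nonempty)
    {t : ℤ} (ht : |t| ≤ 1) (hsingle : #F = 1 → t ≠ 0) :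
    ∃ W : α → ℤ, (∀ a ∈ F, W a ≠ 0 ∧ |W a| ≤ 2) ∧ ∑ a ∈ F, W a = t := by
  induction hF using Finset.Nonempty.cons_induction generalizing t with
  | singleton a =>
    refine ⟨fun _ => t, fun _ _ => ⟨hsingle (card_singleton a), ht.trans one_le_two⟩, ?_⟩
    rw [sum_singleton]
  | cons a F ha hF ih =>
    -- a nonzero target for the rest keeps it solvable even when the rest is a singleton
    set t' : ℤ := if 0 ≤ t then -1 else 1 with ht'
    obtain ⟨W, hW, hsum⟩ := ih (t := t') (by rw [ht']; split_ifs <;> norm_num)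
      (fun _ => by rw [ht']; split_ifs <;> norm_num)
    refine ⟨Function.update W a (t - t'), fun b hb => ?_, ?_⟩
    · rcases mem_cons.1 hb with rfl | hb
      · rw [Function.update_self, ht', abs_le]
        have := abs_le.1 ht
        split_ifs <;> omega
      · rw [Function.update_of_ne (ne_of_mem_of_not_mem hb ha)]
        exact hW b hb
    · rw [sum_cons, Function.update_self, sum_update_of_notMem ha, hsum, sub_add_cancel]

theorem card_le_two_mul_card_filter_mem_add_one {α : Type*} [Fintype α] [DecidableEq α]
    {B : Finset (Finset α)} (hcard : ∀ b ∈ B, #b = 3) (x : α)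
    (hcover : ∀ y, y ≠ x → ∃ b ∈ B, x ∈ b ∧ y ∈ b) :
    Fintype.card α ≤ 2 * #{b ∈ B | x ∈ b} + 1 := by
  have hsub : univ.erase x ⊆ {b ∈ B | x ∈ b}.biUnion (·.erase x) := by
    intro y hy
    obtain ⟨b, hb, hxb, hyb⟩ := hcover y (ne_of_mem_erase hy)
    exact mem_biUnion.2 ⟨b, mem_filter.2 ⟨hb, hxb⟩, mem_erase.2 ⟨ne_of_mem_erase hy, hyb⟩⟩
  have hpair : ∀ b ∈ {b ∈ B | x ∈ b}, #(b.erase x) ≤ 2 := fun b hb => by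
    rw [card_erase_of_mem (mem_filter.1 hb).2, hcard b (mem_filter.1 hb).1]
  calc Fintype.card α = #(univ.erase x) + 1 := (card_erase_add_one (mem_univ x)).symm
    _ ≤ 2 * #{b ∈ B | x ∈ b} + 1 := by
      rw [mul_comm]
      gcongr
      exact (card_le_card hsub).trans (card_biUnion_le_card_mul _ _ _ hpair)

section Cyclic

variable {v : ℕ} [NeZero v]

lemma vadd_mem_of_image_add_one_mem {B : Finset (Finset (ZMod v))}
    (hcyc : ∀ b ∈ B, b.image (fun x => x + 1) ∈ B) (k : ZMod v) :
    ∀ b ∈ B, k +ᵥ b ∈ B := by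
  have hnat (n : ℕ) : ∀ b ∈ B, (n : ZMod v) +ᵥ b ∈ B := by
    induction n with
    | zero => simp
    | succ n ih =>
      intro b hb
      rw [Nat.cast_succ, add_comm, ← vadd_vadd]
      convert hcyc _ (ih b hb) using 1
      simp only [vadd_finset_def (a := (1 : ZMod v)), vadd_eq_add, add_comm]
  simpa using hnat k.val

lemma card_periods_eq_one_of_zero_mem_of_one_mem {p : ℕ} (hp : p.Prime) (hpv : p < v)
    {b : Finset (ZMod v)} (hb : #b = p) (h0 : 0 ∈ b) (h1 : 1 ∈ b) : #(periods b) = 1 := by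
  by_contra hne
  have hper := card_periods_eq_card_of_ne_one (hb ▸ hp) hne
  have hmem : (1 : ZMod v) ∈ periods b := by
    rwa [← vadd_periods_eq h0 hper, zero_vadd] at h1
  have hzero := card_nsmul_eq_zero_of_mem_periods hmem
  rw [hb, nsmul_one, ZMod.natCast_eq_zero_iff] at hzero
  exact absurd (Nat.le_of_dvd hp.pos hzero) hpv.not_ge

end Cyclic

/-- every cyclic STS(v) with v > 7 admits a zero-sum 4-flow. -/
theorem cyclic_sts_zero_sum_4_flow (v : ℕ) [NeZero v] (hv : 7 < v)
    (B : Finset (Finset (ZMod v)))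
    (hcard : ∀ b ∈ B, b.card = 3)
    (hpairs : ∀ x y : ZMod v, x ≠ y → ∃! b, b ∈ B ∧ x ∈ b ∧ y ∈ b)
    (hcyc : ∀ b ∈ B, b.image (fun x => x + 1) ∈ B) :
    ∃ f : Finset (ZMod v) → ℤ,
      (∀ b ∈ B, f b ≠ 0 ∧ |f b| ≤ 3) ∧
      ∀ x : ZMod v, ∑ b ∈ B.filter (fun b => x ∈ b), f b = 0 := by
  have horbits := sum_filter_mem_eq_sum_shortOrbits_add (M := ℤ)
    (fun b hb k => vadd_mem_of_image_add_one_mem hcyc k b hb) Nat.prime_three hcard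
  have hshort := card_shortOrbits_le_one Nat.prime_three hcard
  have : Fact (1 < v) := ⟨by omega⟩
  obtain ⟨b₀, ⟨hb₀, h0, h1⟩, -⟩ := hpairs 0 1 zero_ne_one
  have hfull : (fullOrbits B).Nonempty := ⟨_, mem_image_of_mem translates (mem_filter.2 ⟨hb₀,
    card_periods_eq_one_of_zero_mem_of_one_mem Nat.prime_three (by omega) (hcard b₀ hb₀) h0 h1⟩)⟩
  have hsingle : #(fullOrbits B) = 1 → (#(shortOrbits B) : ℤ) ≠ 0 := by
    intro hone hzero
    have hcover := card_le_two_mul_card_filter_mem_add_one hcard 0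
      fun y hy => (hpairs 0 y hy.symm).exists
    have hcount := horbits (fun _ => 1) 0
    simp only [sum_const, nsmul_eq_mul, mul_one] at hcount
    rw [ZMod.card] at hcover
    omega
  obtain ⟨W, hW, hWsum⟩ := exists_nonzero_weights_sum_eq hfull (t := #(shortOrbits B))
    (by rw [abs_le]; omega) hsingle
  refine ⟨fun b => if translates b ∈ fullOrbits B then W (translates b) else -3,
    fun b _ => ?_, fun x => ?_⟩
  · dsimp only
    split_ifs with h
    · exact ⟨(hW _ h).1, (hW _ h).2.trans (by norm_num)⟩
    · norm_num
  · rw [horbits (fun O => if O ∈ fullOrbits B then W O else -3),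
      sum_ite_of_false fun O hO => disjoint_left.1 (disjoint_shortOrbits_fullOrbits B) hO,
      sum_ite_of_true fun O hO => hO, hWsum, sum_const, nsmul_eq_mul, nsmul_eq_mul]
    ring
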